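/- Per-step interior-point reward update bound (Appendix C): in a finite discounted MDP, let δ > 0, t > 0, let R : S → A → ℝ be a reward signal, and let π, π' be policies with (π s a = 0 → π' s a = 0) such that D̄_KL(π'‖π) ≤ δ and 𝔸_R(π,π') ≥ −1/t (as holds when π' is a 1/t-suboptimal solution of the trust-region subproblem via the interior-point method). Then J_R(π') − J_R(π) ≥ − 1/((1−γ)·t) − √(2δ) · γ · ε_R(π,π') / (1−γ)². -/

import Mathlib

/-!
By the performance difference lemma, `(1 - γ) (J_R(π') - J_R(π)) = ∑ₛ d_π'(s) g(s)` with
`g(s) = ∑ₐ π'(s,a) A_R^π(s,a)`. Replacing `d_π'` by `d_π` turns the right-hand side into the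
surrogate advantage, which is `≥ -1/t`, at a cost of at most `ε_R(π,π') ‖d_π' - d_π‖₁`.
Each visitation measure is stationary for the chain of its policy restarted from `ρ0` at rate
`1 - γ`, so `(1 - γ) ‖d_π' - d_π‖₁ ≤ γ 𝔼_{d_π} ‖π'(s,·) - π(s,·)‖₁`, and by Pinsker's inequality
and Cauchy–Schwarz this expectation is at most `√(2 D̄_KL(π'‖π)) ≤ √(2δ)`. Pinsker's inequality
itself follows from Cauchy–Schwarz and the pointwise bound
`3 (x - 1)² ≤ 2 (x + 2) (x log x - x + 1)`.
-/

open Real BigOperators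

/-- Induced transition matrix of policy `pol`: `P_pol(s,s') = ∑ a, pol s a * P s a s'`. -/
noncomputable def transMat {S A : Type*} [Fintype A] (P : S → A → S → ℝ)
    (pol : S → A → ℝ) : Matrix S S ℝ :=
  fun s s' => ∑ a, pol s a * P s a s'

/-- Discounted state visitation distribution
`d_pol(s) = (1-γ) ∑ₜ γ^t ∑_{s0} ρ0 s0 * (P_pol^t)(s0,s)`. -/
noncomputable def dVisit {S A : Type*} [Fintype S] [DecidableEq S] [Fintype A]
    (P : S → A → S → ℝ) (γ : ℝ) (ρ0 : S → ℝ) (pol : S → A → ℝ) (s : S) : ℝ :=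
  (1 - γ) * ∑' t : ℕ, γ ^ t * ∑ s0, ρ0 s0 * (transMat P pol ^ t) s0 s

/-- Value function of signal `F` under policy `pol`. -/
noncomputable def Vfun {S A : Type*} [Fintype S] [DecidableEq S] [Fintype A]
    (P : S → A → S → ℝ) (γ : ℝ) (F : S → A → ℝ) (pol : S → A → ℝ) (s : S) : ℝ :=
  ∑' t : ℕ, γ ^ t * ∑ s', (transMat P pol ^ t) s s' * ∑ a, pol s' a * F s' a

/-- Return `J_F(pol) = ∑ s, ρ0 s * V_F^pol(s)`. -/
noncomputable def Jret {S A : Type*} [Fintype S] [DecidableEq S] [Fintype A]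
    (P : S → A → S → ℝ) (γ : ℝ) (ρ0 : S → ℝ) (F : S → A → ℝ) (pol : S → A → ℝ) : ℝ :=
  ∑ s, ρ0 s * Vfun P γ F pol s

/-- Action-value function `Q_F^pol(s,a) = F s a + γ ∑_{s'} P s a s' * V_F^pol(s')`. -/
noncomputable def Qfun {S A : Type*} [Fintype S] [DecidableEq S] [Fintype A]
    (P : S → A → S → ℝ) (γ : ℝ) (F : S → A → ℝ) (pol : S → A → ℝ) (s : S) (a : A) : ℝ :=
  F s a + γ * ∑ s', P s a s' * Vfun P γ F pol s'

/-- Advantage function `A_F^pol(s,a) = Q_F^pol(s,a) - V_F^pol(s)`. -/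
noncomputable def Adv {S A : Type*} [Fintype S] [DecidableEq S] [Fintype A]
    (P : S → A → S → ℝ) (γ : ℝ) (F : S → A → ℝ) (pol : S → A → ℝ) (s : S) (a : A) : ℝ :=
  Qfun P γ F pol s a - Vfun P γ F pol s

/-- Expected surrogate advantage
`𝔸_F(pol,pol') = ∑ s, d_pol(s) ∑ a, pol' s a * A_F^pol(s,a)`. -/
noncomputable def surrAdv {S A : Type*} [Fintype S] [DecidableEq S] [Fintype A]
    (P : S → A → S → ℝ) (γ : ℝ) (ρ0 : S → ℝ) (F : S → A → ℝ)
    (pol pol' : S → A → ℝ) : ℝ :=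
  ∑ s, dVisit P γ ρ0 pol s * ∑ a, pol' s a * Adv P γ F pol s a

/-- `ε_F(pol,pol') = max_s |∑ a, pol' s a * A_F^pol(s,a)|`. -/
noncomputable def epsAdv {S A : Type*} [Fintype S] [DecidableEq S] [Fintype A] [Nonempty S]
    (P : S → A → S → ℝ) (γ : ℝ) (F : S → A → ℝ) (pol pol' : S → A → ℝ) : ℝ :=
  Finset.univ.sup' Finset.univ_nonempty fun s => |∑ a, pol' s a * Adv P γ F pol s a|

/-- Per-state KL divergence `KL(pol'‖pol)(s) = ∑ a, pol' s a * log (pol' s a / pol s a)`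
(with the convention `0 * log 0 = 0`, automatic since `Real.log 0 = 0`). -/
noncomputable def klState {S A : Type*} [Fintype A] (pol' pol : S → A → ℝ) (s : S) : ℝ :=
  ∑ a, pol' s a * Real.log (pol' s a / pol s a)

/-- Averaged KL divergence `D̄_KL(pol'‖pol) = ∑ s, d_pol(s) * KL(pol'‖pol)(s)`. -/
noncomputable def avgKL {S A : Type*} [Fintype S] [DecidableEq S] [Fintype A]
    (P : S → A → S → ℝ) (γ : ℝ) (ρ0 : S → ℝ) (pol' pol : S → A → ℝ) : ℝ :=
  ∑ s, dVisit P γ ρ0 pol s * klState pol' pol s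

open Finset Matrix InformationTheory

lemma monotoneOn_add_one_mul_log_sub :
    MonotoneOn (fun x : ℝ => (x + 1) * log x - 2 * (x - 1)) (Set.Ioi 0) := by
  have hderiv (x : ℝ) (hx : x ≠ 0) :
      HasDerivAt (fun x : ℝ => (x + 1) * log x - 2 * (x - 1)) (log x + x⁻¹ - 1) x :=
    ((((hasDerivAt_id' x).add_const 1).fun_mul (hasDerivAt_log hx)).fun_sub
      (((hasDerivAt_id' x).sub_const 1).const_mul 2)).congr_deriv (by field_simp; ring)
  refine monotoneOn_of_hasDerivWithinAt_nonneg (f' := fun x => log x + x⁻¹ - 1) (convex_Ioi 0)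
    (fun x hx => (hderiv x (ne_of_gt hx)).continuousAt.continuousWithinAt)
    (fun x hx => ?_) (fun x hx => ?_) <;> rw [interior_Ioi] at hx
  · exact (hderiv x (ne_of_gt hx)).hasDerivWithinAt
  · linarith [one_sub_inv_le_log_of_pos hx]

lemma three_mul_sq_sub_one_le_klFun {x : ℝ} (hx : 0 ≤ x) :
    3 * (x - 1) ^ 2 ≤ 2 * (x + 2) * klFun x := by
  set φ : ℝ → ℝ := fun x => 2 * (x + 2) * klFun x - 3 * (x - 1) ^ 2
  set ψ : ℝ → ℝ := fun x => (x + 1) * log x - 2 * (x - 1)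
  suffices φ 1 ≤ φ x by simpa [φ, klFun_one, sub_nonneg] using this
  have hφc : Continuous φ := by fun_prop [continuous_klFun]
  have hφ' (y : ℝ) (hy : 0 < y) : HasDerivAt φ (4 * ψ y) y :=
    (((((hasDerivAt_id' y).add_const 2).const_mul 2).fun_mul (hasDerivAt_klFun hy.ne')).fun_sub
      ((((hasDerivAt_id' y).sub_const 1).fun_pow 2).const_mul 3)).congr_deriv
      (by simp [ψ, klFun_apply]; ring)
  have hψ {y z : ℝ} (hy : 0 < y) (hz : 0 < z) (hyz : y ≤ z) : ψ y ≤ ψ z :=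
    monotoneOn_add_one_mul_log_sub (Set.mem_Ioi.mpr hy) (Set.mem_Ioi.mpr hz) hyz
  have hψ1 : ψ 1 = 0 := by simp [ψ]
  rcases le_total x 1 with hx1 | hx1
  · refine antitoneOn_of_hasDerivWithinAt_nonpos (f' := fun y => 4 * ψ y) (convex_Icc 0 1)
      hφc.continuousOn (fun y hy => ?_) (fun y hy => ?_) ⟨hx, hx1⟩ ⟨zero_le_one, le_rfl⟩ hx1 <;>
      rw [interior_Icc] at hy
    · exact (hφ' y hy.1).hasDerivWithinAt
    · linarith [hψ hy.1 one_pos hy.2.le]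
  · refine monotoneOn_of_hasDerivWithinAt_nonneg (f' := fun y => 4 * ψ y) (convex_Ici 1)
      hφc.continuousOn (fun y hy => ?_) (fun y hy => ?_) Set.self_mem_Ici hx1 hx1 <;>
      rw [interior_Ici] at hy
    · exact (hφ' y (one_pos.trans hy)).hasDerivWithinAt
    · linarith [hψ one_pos (one_pos.trans hy) hy.le]

lemma mul_klFun_div_eq {p q : ℝ} (hpq : q = 0 → p = 0) :
    q * klFun (p / q) = p * log (p / q) - p + q := by
  rcases eq_or_ne q 0 with rfl | hq
  · simp [hpq rfl]
  · rw [klFun_apply]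
    field_simp
    ring

lemma three_mul_sq_sub_le_mul_klFun {p q : ℝ} (hp : 0 ≤ p) (hq : 0 ≤ q) (hpq : q = 0 → p = 0) :
    3 * (p - q) ^ 2 ≤ 2 * (p + 2 * q) * (q * klFun (p / q)) := by
  rcases hq.eq_or_lt with rfl | hq
  · simp [hpq rfl]
  · obtain ⟨x, hx, rfl⟩ : ∃ x, 0 ≤ x ∧ p = q * x := ⟨p / q, div_nonneg hp hq.le, by field_simp⟩
    rw [mul_div_cancel_left₀ x hq.ne']
    calc 3 * (q * x - q) ^ 2 = q ^ 2 * (3 * (x - 1) ^ 2) := by ring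
      _ ≤ q ^ 2 * (2 * (x + 2) * klFun x) :=
        mul_le_mul_of_nonneg_left (three_mul_sq_sub_one_le_klFun hx) (sq_nonneg q)
      _ = 2 * (q * x + 2 * q) * (q * klFun x) := by ring

/-- **Pinsker's inequality** for distributions on a finite type. -/
theorem sq_sum_abs_sub_le_two_mul_sum_mul_log {ι : Type*} [Fintype ι] {p q : ι → ℝ}
    (hp : ∀ i, 0 ≤ p i) (hq : ∀ i, 0 ≤ q i) (hp1 : ∑ i, p i = 1) (hq1 : ∑ i, q i = 1)
    (hpq : ∀ i, q i = 0 → p i = 0) :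
    (∑ i, |p i - q i|) ^ 2 ≤ 2 * ∑ i, p i * log (p i / q i) := by
  have hCS := sum_sq_le_sum_mul_sum_of_sq_le_mul univ (r := fun i => |p i - q i|)
    (f := fun i => p i + 2 * q i) (g := fun i => 2 / 3 * (q i * klFun (p i / q i)))
    (fun i _ => by linarith [hp i, hq i])
    (fun i _ => mul_nonneg (by norm_num)
      (mul_nonneg (hq i) (klFun_nonneg (div_nonneg (hp i) (hq i)))))
    (fun i _ => by
      rw [sq_abs]; linarith [three_mul_sq_sub_le_mul_klFun (hp i) (hq i) (hpq i)])
  simp only [sum_add_distrib, ← mul_sum, hp1, hq1, mul_klFun_div_eq (hpq _),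
    sum_sub_distrib] at hCS
  linarith

lemma summable_geometric_mul_of_abs_le {γ : ℝ} (hγ0 : 0 ≤ γ) (hγ1 : γ < 1) {f : ℕ → ℝ} {C : ℝ}
    (hf : ∀ t, |f t| ≤ C) : Summable fun t => γ ^ t * f t :=
  .of_norm_bounded ((summable_geometric_of_lt_one hγ0 hγ1).mul_right C) fun t => by
    rw [norm_mul, norm_pow, Real.norm_of_nonneg hγ0]
    exact mul_le_mul_of_nonneg_left (hf t) (by positivity)

namespace Matrix

variable {n : Type*} [Fintype n] [DecidableEq n] {M : Matrix n n ℝ} {γ : ℝ}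

lemma abs_mulVec_apply_le (hM : M ∈ rowStochastic ℝ n) (v : n → ℝ) (i : n) :
    |(M *ᵥ v) i| ≤ ∑ j, |v j| :=
  (abs_sum_le_sum_abs _ _).trans <| sum_le_sum fun j _ => by
    rw [abs_mul, abs_of_nonneg (nonneg_of_mem_rowStochastic hM)]
    exact mul_le_of_le_one_left (abs_nonneg _) (le_one_of_mem_rowStochastic hM)

lemma sum_abs_vecMul_le (hM : M ∈ rowStochastic ℝ n) (x : n → ℝ) :
    ∑ j, |(x ᵥ* M) j| ≤ ∑ i, |x i| :=
  calc ∑ j, |(x ᵥ* M) j| ≤ ∑ j, ∑ i, |x i| * M i j :=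
        sum_le_sum fun j _ => (abs_sum_le_sum_abs _ _).trans_eq <| sum_congr rfl fun i _ => by
          rw [abs_mul, abs_of_nonneg (nonneg_of_mem_rowStochastic hM)]
    _ = ∑ i, |x i| := by
        rw [sum_comm]
        simp only [← mul_sum, sum_row_of_mem_rowStochastic hM, mul_one]

lemma abs_vecMul_apply_le (hM : M ∈ rowStochastic ℝ n) (x : n → ℝ) (j : n) :
    |(x ᵥ* M) j| ≤ ∑ i, |x i| :=
  (single_le_sum (f := fun j => |(x ᵥ* M) j|) (fun _ _ => abs_nonneg _) (mem_univ j)).trans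
    (sum_abs_vecMul_le hM x)

lemma one_sub_mul_sum_abs_le (hM : M ∈ rowStochastic ℝ n) (hγ0 : 0 ≤ γ) {x y : n → ℝ}
    (hxy : ∀ i, x i = γ * (x ᵥ* M) i + y i) : (1 - γ) * ∑ i, |x i| ≤ ∑ i, |y i| := by
  have : ∑ i, |x i| ≤ γ * ∑ i, |x i| + ∑ i, |y i| :=
    calc ∑ i, |x i| ≤ ∑ i, (γ * |(x ᵥ* M) i| + |y i|) := sum_le_sum fun i _ => by
          rw [hxy i]
          exact (abs_add_le _ _).trans_eq (by rw [abs_mul, abs_of_nonneg hγ0])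
      _ ≤ γ * ∑ i, |x i| + ∑ i, |y i| := by
          rw [sum_add_distrib, ← mul_sum]
          linarith [mul_le_mul_of_nonneg_left (sum_abs_vecMul_le hM x) hγ0]
  linarith

variable (hM : M ∈ rowStochastic ℝ n) (hγ0 : 0 ≤ γ) (hγ1 : γ < 1)
include hM hγ0 hγ1

lemma tsum_geometric_mul_pow_mulVec (v : n → ℝ) (i : n) :
    ∑' t : ℕ, γ ^ t * (M ^ t *ᵥ v) i
      = v i + γ * ∑ j, M i j * ∑' t : ℕ, γ ^ t * (M ^ t *ᵥ v) j := by
  have hs (j : n) : Summable fun t : ℕ => γ ^ t * (M ^ t *ᵥ v) j :=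
    summable_geometric_mul_of_abs_le hγ0 hγ1 fun t =>
      abs_mulVec_apply_le (pow_mem hM t) v j
  rw [(hs i).tsum_eq_zero_add, pow_zero, one_mul, pow_zero, one_mulVec]
  congr 1
  calc ∑' t : ℕ, γ ^ (t + 1) * (M ^ (t + 1) *ᵥ v) i
      = ∑' t : ℕ, γ * ∑ j, M i j * (γ ^ t * (M ^ t *ᵥ v) j) := tsum_congr fun t => by
        rw [pow_succ' M, ← mulVec_mulVec, mulVec, dotProduct, pow_succ' γ, mul_sum, mul_sum]
        exact sum_congr rfl fun j _ => by ring
    _ = γ * ∑ j, M i j * ∑' t : ℕ, γ ^ t * (M ^ t *ᵥ v) j := by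
        rw [tsum_mul_left, Summable.tsum_finsetSum fun j _ => (hs j).mul_left _]
        simp_rw [tsum_mul_left]

lemma tsum_geometric_mul_vecMul_pow (x : n → ℝ) (j : n) :
    ∑' t : ℕ, γ ^ t * (x ᵥ* M ^ t) j
      = x j + γ * ∑ i, (∑' t : ℕ, γ ^ t * (x ᵥ* M ^ t) i) * M i j := by
  have hs (i : n) : Summable fun t : ℕ => γ ^ t * (x ᵥ* M ^ t) i :=
    summable_geometric_mul_of_abs_le hγ0 hγ1 fun t =>
      abs_vecMul_apply_le (pow_mem hM t) x i
  rw [(hs j).tsum_eq_zero_add, pow_zero, one_mul, pow_zero, vecMul_one]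
  congr 1
  calc ∑' t : ℕ, γ ^ (t + 1) * (x ᵥ* M ^ (t + 1)) j
      = ∑' t : ℕ, γ * ∑ i, (γ ^ t * (x ᵥ* M ^ t) i) * M i j := tsum_congr fun t => by
        rw [pow_succ M, ← vecMul_vecMul, vecMul, dotProduct, pow_succ' γ, mul_sum, mul_sum]
        exact sum_congr rfl fun i _ => by ring
    _ = γ * ∑ i, (∑' t : ℕ, γ ^ t * (x ᵥ* M ^ t) i) * M i j := by
        rw [tsum_mul_left, Summable.tsum_finsetSum fun i _ => (hs i).mul_right _]
        simp_rw [tsum_mul_right]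

end Matrix

section MDP

variable {S A : Type*} [Fintype S] [Fintype A] {P : S → A → S → ℝ} {γ : ℝ}
  {ρ0 : S → ℝ} {pol pol' : S → A → ℝ}

lemma sum_abs_transMat_sub_le (hP0 : ∀ s a s', 0 ≤ P s a s')
    (hP1 : ∀ s a, ∑ s', P s a s' = 1) (s : S) :
    ∑ s', |transMat P pol' s s' - transMat P pol s s'| ≤ ∑ a, |pol' s a - pol s a| :=
  calc ∑ s', |transMat P pol' s s' - transMat P pol s s'|
      = ∑ s', |∑ a, (pol' s a - pol s a) * P s a s'| := by
        simp only [transMat, ← sum_sub_distrib, sub_mul]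
    _ ≤ ∑ s', ∑ a, |pol' s a - pol s a| * P s a s' :=
        sum_le_sum fun s' _ => (abs_sum_le_sum_abs _ _).trans_eq <| sum_congr rfl fun a _ => by
          rw [abs_mul, abs_of_nonneg (hP0 s a s')]
    _ = ∑ a, |pol' s a - pol s a| := by
        rw [sum_comm]
        simp only [← mul_sum, hP1, mul_one]

variable [DecidableEq S]

lemma transMat_mem_rowStochastic (hP0 : ∀ s a s', 0 ≤ P s a s')
    (hP1 : ∀ s a, ∑ s', P s a s' = 1) (hpol0 : ∀ s a, 0 ≤ pol s a)
    (hpol1 : ∀ s, ∑ a, pol s a = 1) : transMat P pol ∈ rowStochastic ℝ S :=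
  mem_rowStochastic_iff_sum.2
    ⟨fun s s' => sum_nonneg fun a _ => mul_nonneg (hpol0 s a) (hP0 s a s'), fun s => by
      change ∑ s', ∑ a, pol s a * P s a s' = 1
      rw [sum_comm]
      simp only [← mul_sum, hP1, mul_one, hpol1]⟩

lemma sum_mul_Adv_eq (F : S → A → ℝ) {s : S} (hpol'1 : ∑ a, pol' s a = 1) :
    ∑ a, pol' s a * Adv P γ F pol s a
      = ∑ a, pol' s a * F s a + γ * ∑ s', transMat P pol' s s' * Vfun P γ F pol s'
        - Vfun P γ F pol s := by
  have hPV : ∑ a, pol' s a * ∑ s', P s a s' * Vfun P γ F pol s'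
      = ∑ s', transMat P pol' s s' * Vfun P γ F pol s' := by
    simp only [transMat, mul_sum, sum_mul]
    rw [sum_comm]
    exact sum_congr rfl fun _ _ => sum_congr rfl fun _ _ => (mul_assoc _ _ _).symm
  calc ∑ a, pol' s a * Adv P γ F pol s a
      = ∑ a, (pol' s a * F s a + γ * (pol' s a * ∑ s', P s a s' * Vfun P γ F pol s')
          - pol' s a * Vfun P γ F pol s) := sum_congr rfl fun a _ => by rw [Adv, Qfun]; ring
    _ = _ := by rw [sum_sub_distrib, sum_add_distrib, ← mul_sum, ← sum_mul, hpol'1, one_mul, hPV]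

variable (hγ0 : 0 ≤ γ) (hγ1 : γ < 1)
include hγ0 hγ1

lemma Vfun_eq (hM : transMat P pol ∈ rowStochastic ℝ S) (F : S → A → ℝ) (s : S) :
    Vfun P γ F pol s
      = ∑ a, pol s a * F s a + γ * ∑ s', transMat P pol s s' * Vfun P γ F pol s' :=
  tsum_geometric_mul_pow_mulVec hM hγ0 hγ1 _ s

lemma dVisit_eq (hM : transMat P pol ∈ rowStochastic ℝ S) (s : S) :
    dVisit P γ ρ0 pol s
      = (1 - γ) * ρ0 s + γ * ∑ u, dVisit P γ ρ0 pol u * transMat P pol u s := by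
  have hd (s : S) :
      dVisit P γ ρ0 pol s = (1 - γ) * ∑' t : ℕ, γ ^ t * (ρ0 ᵥ* transMat P pol ^ t) s := rfl
  simp only [hd, tsum_geometric_mul_vecMul_pow hM hγ0 hγ1 ρ0 s, mul_add, mul_sum]
  congr 1
  exact sum_congr rfl fun _ _ => by ring

lemma dVisit_nonneg (hM : transMat P pol ∈ rowStochastic ℝ S) (hρ0 : ∀ s, 0 ≤ ρ0 s) (s : S) :
    0 ≤ dVisit P γ ρ0 pol s :=
  mul_nonneg (sub_nonneg.2 hγ1.le) <| tsum_nonneg fun t => mul_nonneg (pow_nonneg hγ0 t)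
    (nonneg_vecMul_of_mem_rowStochastic (pow_mem hM t) hρ0 s)

lemma sum_dVisit (hM : transMat P pol ∈ rowStochastic ℝ S) (hρ1 : ∑ s, ρ0 s = 1) :
    ∑ s, dVisit P γ ρ0 pol s = 1 := by
  have h : ∑ s, dVisit P γ ρ0 pol s = (1 - γ) + γ * ∑ s, dVisit P γ ρ0 pol s :=
    calc ∑ s, dVisit P γ ρ0 pol s
        = ∑ s, ((1 - γ) * ρ0 s + γ * ∑ u, dVisit P γ ρ0 pol u * transMat P pol u s) :=
          sum_congr rfl fun s _ => dVisit_eq hγ0 hγ1 hM s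
      _ = (1 - γ) + γ * ∑ s, dVisit P γ ρ0 pol s := by
          rw [sum_add_distrib, ← mul_sum, hρ1, mul_one, ← mul_sum, sum_comm]
          simp only [← mul_sum, sum_row_of_mem_rowStochastic hM, mul_one]
  exact mul_left_cancel₀ (sub_ne_zero.2 hγ1.ne') (by linarith)

lemma sum_dVisit_mul_sub (hM : transMat P pol ∈ rowStochastic ℝ S) (W : S → ℝ) :
    ∑ s, dVisit P γ ρ0 pol s * (W s - γ * ∑ s', transMat P pol s s' * W s')
      = (1 - γ) * ∑ s, ρ0 s * W s := by
  have hd (s' : S) : γ * ∑ s, dVisit P γ ρ0 pol s * transMat P pol s s'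
      = dVisit P γ ρ0 pol s' - (1 - γ) * ρ0 s' := by
    linarith [dVisit_eq hγ0 hγ1 hM (ρ0 := ρ0) s']
  calc ∑ s, dVisit P γ ρ0 pol s * (W s - γ * ∑ s', transMat P pol s s' * W s')
      = ∑ s, dVisit P γ ρ0 pol s * W s
          - ∑ s', (γ * ∑ s, dVisit P γ ρ0 pol s * transMat P pol s s') * W s' := by
        simp only [mul_sub, sum_sub_distrib, mul_sum, sum_mul]
        rw [sum_comm (s := univ) (t := univ)]
        congr 1
        exact sum_congr rfl fun _ _ => sum_congr rfl fun _ _ => by ring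
    _ = (1 - γ) * ∑ s, ρ0 s * W s := by
        simp only [hd, sub_mul, sum_sub_distrib, mul_sum, mul_assoc]
        ring

/-- The **performance difference lemma**. -/
theorem performance_difference (hM' : transMat P pol' ∈ rowStochastic ℝ S)
    (hpol'1 : ∀ s, ∑ a, pol' s a = 1) (F : S → A → ℝ) :
    ∑ s, dVisit P γ ρ0 pol' s * ∑ a, pol' s a * Adv P γ F pol s a
      = (1 - γ) * (Jret P γ ρ0 F pol' - Jret P γ ρ0 F pol) := by
  have hg (s : S) : ∑ a, pol' s a * Adv P γ F pol s a
      = (Vfun P γ F pol' s - γ * ∑ s', transMat P pol' s s' * Vfun P γ F pol' s')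
        - (Vfun P γ F pol s - γ * ∑ s', transMat P pol' s s' * Vfun P γ F pol s') := by
    rw [sum_mul_Adv_eq F (hpol'1 s)]
    linarith [Vfun_eq hγ0 hγ1 hM' F s]
  rw [sum_congr rfl fun s _ => by rw [hg s, mul_sub], sum_sub_distrib,
    sum_dVisit_mul_sub hγ0 hγ1 hM', sum_dVisit_mul_sub hγ0 hγ1 hM', ← mul_sub]
  rfl

lemma sum_abs_dVisit_sub_le (hP0 : ∀ s a s', 0 ≤ P s a s') (hP1 : ∀ s a, ∑ s', P s a s' = 1)
    (hM : transMat P pol ∈ rowStochastic ℝ S) (hM' : transMat P pol' ∈ rowStochastic ℝ S)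
    (hρ0 : ∀ s, 0 ≤ ρ0 s) :
    (1 - γ) * ∑ s, |dVisit P γ ρ0 pol' s - dVisit P γ ρ0 pol s|
      ≤ γ * ∑ u, dVisit P γ ρ0 pol u * ∑ a, |pol' u a - pol u a| := by
  have hd0 := dVisit_nonneg hγ0 hγ1 hM hρ0
  -- stationarity of both measures gives `d' - d = γ (d' - d) M' + γ d (M' - M)`
  refine (one_sub_mul_sum_abs_le hM' hγ0 (y := fun s =>
    γ * ∑ u, dVisit P γ ρ0 pol u * (transMat P pol' u s - transMat P pol u s)) fun s => ?_).trans ?_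
  · simp only [vecMul, dotProduct]
    rw [dVisit_eq hγ0 hγ1 hM' s, dVisit_eq hγ0 hγ1 hM s]
    simp only [sub_mul, mul_sub, sum_sub_distrib]
    ring
  · calc ∑ s, |γ * ∑ u, dVisit P γ ρ0 pol u * (transMat P pol' u s - transMat P pol u s)|
        ≤ ∑ s, γ * ∑ u, dVisit P γ ρ0 pol u * |transMat P pol' u s - transMat P pol u s| :=
          sum_le_sum fun s _ => by
            rw [abs_mul, abs_of_nonneg hγ0]
            refine mul_le_mul_of_nonneg_left ((abs_sum_le_sum_abs _ _).trans_eq ?_) hγ0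
            exact sum_congr rfl fun u _ => by rw [abs_mul, abs_of_nonneg (hd0 u)]
      _ = γ * ∑ u, dVisit P γ ρ0 pol u * ∑ s, |transMat P pol' u s - transMat P pol u s| := by
          rw [← mul_sum, sum_comm]
          simp only [← mul_sum]
      _ ≤ γ * ∑ u, dVisit P γ ρ0 pol u * ∑ a, |pol' u a - pol u a| := by
          gcongr with u
          · exact hd0 u
          · exact sum_abs_transMat_sub_le hP0 hP1 u

lemma sum_dVisit_mul_sum_abs_sub_le_sqrt (hM : transMat P pol ∈ rowStochastic ℝ S)
    (hρ0 : ∀ s, 0 ≤ ρ0 s) (hρ1 : ∑ s, ρ0 s = 1)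
    (hpol0 : ∀ s a, 0 ≤ pol s a) (hpol1 : ∀ s, ∑ a, pol s a = 1)
    (hpol'0 : ∀ s a, 0 ≤ pol' s a) (hpol'1 : ∀ s, ∑ a, pol' s a = 1)
    (habs : ∀ s a, pol s a = 0 → pol' s a = 0) :
    ∑ u, dVisit P γ ρ0 pol u * ∑ a, |pol' u a - pol u a| ≤ √(2 * avgKL P γ ρ0 pol' pol) := by
  have hd0 := dVisit_nonneg hγ0 hγ1 hM hρ0
  have hPinsker (u : S) : (∑ a, |pol' u a - pol u a|) ^ 2 ≤ 2 * klState pol' pol u :=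
    sq_sum_abs_sub_le_two_mul_sum_mul_log (hpol'0 u) (hpol0 u) (hpol'1 u) (hpol1 u) (habs u)
  have hCS := sum_sq_le_sum_mul_sum_of_sq_le_mul univ
    (r := fun u => dVisit P γ ρ0 pol u * ∑ a, |pol' u a - pol u a|) (f := dVisit P γ ρ0 pol)
    (g := fun u => dVisit P γ ρ0 pol u * (2 * klState pol' pol u))
    (fun u _ => hd0 u) (fun u _ => mul_nonneg (hd0 u) ((sq_nonneg _).trans (hPinsker u)))
    (fun u _ => by
      rw [mul_pow, sq, mul_assoc]
      exact mul_le_mul_of_nonneg_left (mul_le_mul_of_nonneg_left (hPinsker u) (hd0 u)) (hd0 u))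
  refine (le_abs_self _).trans (abs_le_sqrt ?_)
  simpa [sum_dVisit hγ0 hγ1 hM hρ1, avgKL, mul_sum, mul_left_comm] using hCS

end MDP

section Advantage

variable {S A : Type*} [Fintype S] [DecidableEq S] [Fintype A] [Nonempty S]
  {P : S → A → S → ℝ} {γ : ℝ} {ρ0 : S → ℝ} {F pol pol' : S → A → ℝ}

lemma abs_sum_mul_Adv_le_epsAdv (s : S) :
    |∑ a, pol' s a * Adv P γ F pol s a| ≤ epsAdv P γ F pol pol' :=
  le_sup' (fun s => |∑ a, pol' s a * Adv P γ F pol s a|) (mem_univ s)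

lemma epsAdv_nonneg : 0 ≤ epsAdv P γ F pol pol' :=
  (abs_nonneg _).trans (abs_sum_mul_Adv_le_epsAdv (Classical.arbitrary S))

lemma surrAdv_sub_epsAdv_mul_le (hγ0 : 0 ≤ γ) (hγ1 : γ < 1)
    (hM' : transMat P pol' ∈ rowStochastic ℝ S) (hpol'1 : ∀ s, ∑ a, pol' s a = 1) :
    surrAdv P γ ρ0 F pol pol'
        - epsAdv P γ F pol pol' * ∑ s, |dVisit P γ ρ0 pol' s - dVisit P γ ρ0 pol s|
      ≤ (1 - γ) * (Jret P γ ρ0 F pol' - Jret P γ ρ0 F pol) := by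
  have hdrift : |∑ s, (dVisit P γ ρ0 pol' s - dVisit P γ ρ0 pol s) *
      ∑ a, pol' s a * Adv P γ F pol s a|
      ≤ epsAdv P γ F pol pol' * ∑ s, |dVisit P γ ρ0 pol' s - dVisit P γ ρ0 pol s| := by
    refine (abs_sum_le_sum_abs _ _).trans ?_
    rw [mul_sum]
    exact sum_le_sum fun s _ => by
      rw [abs_mul, mul_comm (epsAdv _ _ _ _ _)]
      exact mul_le_mul_of_nonneg_left (abs_sum_mul_Adv_le_epsAdv s) (abs_nonneg _)
  have hsplit : (1 - γ) * (Jret P γ ρ0 F pol' - Jret P γ ρ0 F pol) = surrAdv P γ ρ0 F pol pol'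
      + ∑ s, (dVisit P γ ρ0 pol' s - dVisit P γ ρ0 pol s) * ∑ a, pol' s a * Adv P γ F pol s a := by
    rw [← performance_difference hγ0 hγ1 hM' hpol'1 F, surrAdv, ← sum_add_distrib]
    exact sum_congr rfl fun s _ => by ring
  linarith [neg_abs_le (∑ s, (dVisit P γ ρ0 pol' s - dVisit P γ ρ0 pol s) *
      ∑ a, pol' s a * Adv P γ F pol s a)]

end Advantage

theorem interior_point_reward_step_bound_general {S A : Type*} [Fintype S] [DecidableEq S] [Fintype A] [Nonempty S]
    (P : S → A → S → ℝ) (hP0 : ∀ s a s', 0 ≤ P s a s') (hP1 : ∀ s a, ∑ s', P s a s' = 1)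
    (γ : ℝ) (hγ0 : 0 < γ) (hγ1 : γ < 1)
    (ρ0 : S → ℝ) (hρ0 : ∀ s, 0 ≤ ρ0 s) (hρ1 : ∑ s, ρ0 s = 1)
    (δ : ℝ) (t : ℝ) (R : S → A → ℝ)
    (pol : S → A → ℝ) (hpol0 : ∀ s a, 0 ≤ pol s a) (hpol1 : ∀ s, ∑ a, pol s a = 1) (pol' : S → A → ℝ) (hpol'0 : ∀ s a, 0 ≤ pol' s a) (hpol'1 : ∀ s, ∑ a, pol' s a = 1)
    (habs : ∀ s a, pol s a = 0 → pol' s a = 0)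
    (hKL : avgKL P γ ρ0 pol' pol ≤ δ)
    (hA : -(1 / t) ≤ surrAdv P γ ρ0 R pol pol') :
    Jret P γ ρ0 R pol' - Jret P γ ρ0 R pol ≥
      - (1 / ((1 - γ) * t)) - Real.sqrt (2 * δ) * γ * epsAdv P γ R pol pol' / (1 - γ) ^ 2 := by
  have hM := transMat_mem_rowStochastic hP0 hP1 hpol0 hpol1
  have hM' := transMat_mem_rowStochastic hP0 hP1 hpol'0 hpol'1
  have hgap := surrAdv_sub_epsAdv_mul_le (ρ0 := ρ0) (F := R) (pol := pol) hγ0.le hγ1 hM' hpol'1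
  have hε : 0 ≤ epsAdv P γ R pol pol' := epsAdv_nonneg
  have hL : (1 - γ) * ∑ s, |dVisit P γ ρ0 pol' s - dVisit P γ ρ0 pol s| ≤ γ * √(2 * δ) :=
    (sum_abs_dVisit_sub_le hγ0.le hγ1 hP0 hP1 hM hM' hρ0).trans <| mul_le_mul_of_nonneg_left
      ((sum_dVisit_mul_sum_abs_sub_le_sqrt hγ0.le hγ1 hM hρ0 hρ1 hpol0 hpol1 hpol'0 hpol'1
        habs).trans (Real.sqrt_le_sqrt (by linarith))) hγ0.le
  set ε := epsAdv P γ R pol pol'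
  set L := ∑ s, |dVisit P γ ρ0 pol' s - dVisit P γ ρ0 pol s|
  set ΔJ := Jret P γ ρ0 R pol' - Jret P γ ρ0 R pol
  have h1γ : 0 < 1 - γ := sub_pos.2 hγ1
  have hscaled : -((1 - γ) / t) - √(2 * δ) * γ * ε ≤ (1 - γ) ^ 2 * ΔJ := by
    have hgap' : -(1 / t) - ε * L ≤ (1 - γ) * ΔJ := by linarith
    linear_combination mul_le_mul_of_nonneg_left hgap' h1γ.le + mul_le_mul_of_nonneg_left hL hε
  rw [ge_iff_le, show -(1 / ((1 - γ) * t)) - √(2 * δ) * γ * ε / (1 - γ) ^ 2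
      = (-((1 - γ) / t) - √(2 * δ) * γ * ε) / (1 - γ) ^ 2 by field_simp,
    div_le_iff₀ (by positivity)]
  linarith

/-- per-step interior-point reward update bound (Appendix C). -/
theorem interior_point_reward_step_bound {S A : Type*} [Fintype S] [DecidableEq S] [Fintype A] [Nonempty S] [Nonempty A]
    (P : S → A → S → ℝ) (hP0 : ∀ s a s', 0 ≤ P s a s') (hP1 : ∀ s a, ∑ s', P s a s' = 1)
    (γ : ℝ) (hγ0 : 0 < γ) (hγ1 : γ < 1)
    (ρ0 : S → ℝ) (hρ0 : ∀ s, 0 ≤ ρ0 s) (hρ1 : ∑ s, ρ0 s = 1)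
    (δ : ℝ) (hδ : 0 < δ) (t : ℝ) (ht : 0 < t) (R : S → A → ℝ)
    (pol : S → A → ℝ) (hpol0 : ∀ s a, 0 ≤ pol s a) (hpol1 : ∀ s, ∑ a, pol s a = 1) (pol' : S → A → ℝ) (hpol'0 : ∀ s a, 0 ≤ pol' s a) (hpol'1 : ∀ s, ∑ a, pol' s a = 1)
    (habs : ∀ s a, pol s a = 0 → pol' s a = 0)
    (hKL : avgKL P γ ρ0 pol' pol ≤ δ)
    (hA : -(1 / t) ≤ surrAdv P γ ρ0 R pol pol') :
    Jret P γ ρ0 R pol' - Jret P γ ρ0 R pol ≥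
      - (1 / ((1 - γ) * t)) - Real.sqrt (2 * δ) * γ * epsAdv P γ R pol pol' / (1 - γ) ^ 2 :=
  interior_point_reward_step_bound_general P hP0 hP1 γ hγ0 hγ1 ρ0 hρ0 hρ1 δ t R pol hpol0 hpol1 pol'
    hpol'0 hpol'1 habs hKL hA
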